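/- There exists a primitive embedding ι of the lattice A₆ (ℤ⁶ with Gram matrix having −2 on the diagonal and 1 at adjacent entries of the path 1—2—3—4—5—6) into the lattice E₈ such that the orthogonal complement of ι(ℤ⁶) in E₈, equipped with the restricted bilinear form, is isometric to the lattice C₈⁶ (ℤ² with Gram matrix [[−4,1],[1,−2]]). -/
import Mathlib


open Matrix

/-- The hyperbolic lattice `U`. -/
def U : Matrix (Fin 2) (Fin 2) ℤ := !![0, 1; 1, 0]

/-- The root lattice `A₁` (negative definite). -/
def A1 : Matrix (Fin 1) (Fin 1) ℤ := !![-2]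

/-- The root lattice `A₂` (negative definite). -/
def A2 : Matrix (Fin 2) (Fin 2) ℤ := !![-2, 1; 1, -2]

/-- The root lattice `A₆` (negative definite). -/
def A6 : Matrix (Fin 6) (Fin 6) ℤ :=
  !![-2, 1, 0, 0, 0, 0;
    1, -2, 1, 0, 0, 0;
    0, 1, -2, 1, 0, 0;
    0, 0, 1, -2, 1, 0;
    0, 0, 0, 1, -2, 1;
    0, 0, 0, 0, 1, -2]

/-- The lattice `C₈⁶` of Nishiyama's lemma. -/
def C86 : Matrix (Fin 2) (Fin 2) ℤ := !![-4, 1; 1, -2]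

/-- The root lattice `E₈` (negative of the Cartan matrix, Bourbaki numbering). -/
def E8 : Matrix (Fin 8) (Fin 8) ℤ :=
  !![-2, 0, 1, 0, 0, 0, 0, 0;
    0, -2, 0, 1, 0, 0, 0, 0;
    1, 0, -2, 1, 0, 0, 0, 0;
    0, 1, 1, -2, 1, 0, 0, 0;
    0, 0, 0, 1, -2, 1, 0, 0;
    0, 0, 0, 0, 1, -2, 1, 0;
    0, 0, 0, 0, 0, 1, -2, 1;
    0, 0, 0, 0, 0, 0, 1, -2]

/-- The root lattice `E₇` (nodes 1–7 of `E₈` in Bourbaki numbering). -/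
def E7 : Matrix (Fin 7) (Fin 7) ℤ :=
  !![-2, 0, 1, 0, 0, 0, 0;
    0, -2, 0, 1, 0, 0, 0;
    1, 0, -2, 1, 0, 0, 0;
    0, 1, 1, -2, 1, 0, 0;
    0, 0, 0, 1, -2, 1, 0;
    0, 0, 0, 0, 1, -2, 1;
    0, 0, 0, 0, 0, 1, -2]

/-- The root lattice `E₆` (nodes 1–6 of `E₈` in Bourbaki numbering). -/
def E6 : Matrix (Fin 6) (Fin 6) ℤ :=
  !![-2, 0, 1, 0, 0, 0;
    0, -2, 0, 1, 0, 0;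
    1, 0, -2, 1, 0, 0;
    0, 1, 1, -2, 1, 0;
    0, 0, 0, 1, -2, 1;
    0, 0, 0, 0, 1, -2]

/-- Block-diagonal (direct) sum of two Gram matrices. -/
def dsum {m n : ℕ} (A : Matrix (Fin m) (Fin m) ℤ) (B : Matrix (Fin n) (Fin n) ℤ) :
    Matrix (Fin (m + n)) (Fin (m + n)) ℤ :=
  Matrix.reindex finSumFinEquiv finSumFinEquiv (Matrix.fromBlocks A 0 0 B)

/-- The K3 lattice `Λ_K3 = U ⊕ U ⊕ U ⊕ E₈ ⊕ E₈`. -/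
def LambdaK3 : Matrix (Fin 22) (Fin 22) ℤ := dsum (dsum (dsum (dsum U U) U) E8) E8

def Mmat : Matrix (Fin 8) (Fin 6) ℤ :=
  !![1, 0, 0, 0, 0, 0;
0, 0, 0, 0, 0, 0;
0, 1, 0, 0, 0, 0;
0, 0, 1, 0, 0, 0;
0, 0, 0, 1, 0, 0;
0, 0, 0, 0, 1, 0;
0, 0, 0, 0, 0, 1;
0, 0, 0, 0, 0, 0]

def Nmat : Matrix (Fin 8) (Fin 2) ℤ :=
  !![-3, 2;
-5, 3;
-6, 4;
-9, 6;
-7, 5;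
-5, 4;
-3, 3;
-1, 2]

def Lmat : Matrix (Fin 2) (Fin 8) ℤ :=
  !![12, 28, -6, 0, 0, -58, 50, -1;
0, 14, 0, 0, 0, -29, 25, 0]

def Cmat : Matrix (Fin 8) (Fin 6) ℤ :=
  !![0, 37, 56, 75, 94, -3;
3, 66, 99, 132, 165, -5;
1, 74, 112, 150, 188, -6;
2, 112, 168, 225, 282, -9;
0, 84, 126, 168, 211, -7;
-2, 56, 84, 112, 140, -5;
-4, 28, 42, 56, 70, -3;
-6, 0, 0, 0, 0, 0]

def Lpmat : Matrix (Fin 6) (Fin 8) ℤ :=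
  !![1, 0, 0, 0, 0, 0, 0, 0;
0, 0, 1, 0, 0, 0, 0, 0;
0, 0, 0, 1, 0, 0, 0, 0;
0, 0, 0, 0, 1, 0, 0, 0;
0, 0, 0, 0, 0, 1, 0, 0;
0, 0, 0, 0, 0, 0, 1, 0]

def Cpmat : Matrix (Fin 8) (Fin 2) ℤ :=
  !![0, 0;
1, -1;
0, 0;
0, 0;
0, 0;
0, 0;
0, 0;
0, -1]


lemma key {a b : ℕ} (P : Matrix (Fin 8) (Fin a) ℤ) (G : Matrix (Fin 8) (Fin 8) ℤ)
    (Q : Matrix (Fin 8) (Fin b) ℤ) (x : Fin a → ℤ) (y : Fin b → ℤ) :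
    (P *ᵥ x) ⬝ᵥ (G *ᵥ (Q *ᵥ y)) = x ⬝ᵥ ((Pᵀ * G * Q) *ᵥ y) := by
  rw [Matrix.mul_assoc, ← Matrix.mulVec_mulVec, ← Matrix.mulVec_mulVec,
    Matrix.dotProduct_mulVec x, Matrix.vecMul_transpose, Matrix.dotProduct_mulVec (P *ᵥ x)]

lemma hMEM : Mmatᵀ * E8 * Mmat = A6 := by decide
lemma hNEN : Nmatᵀ * E8 * Nmat = C86 := by decide
lemma hMEN : Mmatᵀ * E8 * Nmat = 0 := by decide
lemma hNEM : Nmatᵀ * E8 * Mmat = 0 := by decide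
lemma hId1 : Nmat * Lmat + Cmat * (Mmatᵀ * E8) = 1 := by decide
lemma hId2 : Mmat * Lpmat + Cpmat * (Nmatᵀ * E8) = 1 := by decide
lemma hLpM : Lpmat * Mmat = 1 := by decide

/-- Nishiyama: there is a primitive embedding of A₆ into E₈ whose orthogonal complement is isometric to C₈⁶. -/
theorem primitive_embedding_A6_E8 :
    ∃ ι : (Fin 6 → ℤ) →ₗ[ℤ] (Fin 8 → ℤ),
      -- ι is an embedding of the lattice (A₆) into (E₈) ...
      Function.Injective ι ∧
      (∀ x y : Fin 6 → ℤ, ι x ⬝ᵥ (E8 *ᵥ ι y) = x ⬝ᵥ (A6 *ᵥ y)) ∧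
      -- ... which is primitive (its image is saturated, i.e. the cokernel is torsion-free) ...
      (∀ (v : Fin 8 → ℤ) (k : ℤ), k ≠ 0 → k • v ∈ LinearMap.range ι → v ∈ LinearMap.range ι) ∧
      -- ... and the orthogonal complement of the image of ι, with the restricted form,
      -- is isometric to (C₈⁶): there is an injective linear map j preserving the forms
      -- whose range is exactly the orthogonal complement of the image of ι.
      ∃ j : (Fin 2 → ℤ) →ₗ[ℤ] (Fin 8 → ℤ),
        Function.Injective j ∧
        (∀ x y : Fin 2 → ℤ, j x ⬝ᵥ (E8 *ᵥ j y) = x ⬝ᵥ (C86 *ᵥ y)) ∧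
        (∀ v : Fin 8 → ℤ, v ∈ LinearMap.range j ↔ ∀ x : Fin 6 → ℤ, v ⬝ᵥ (E8 *ᵥ ι x) = 0) := by
  refine ⟨Matrix.mulVecLin Mmat, ?_, ?_, ?_, Matrix.mulVecLin Nmat, ?_, ?_, ?_⟩
  · intro x y h
    simp only [Matrix.mulVecLin_apply] at h
    have := congrArg (fun v => Lpmat *ᵥ v) h
    simpa [Matrix.mulVec_mulVec, hLpM] using this
  · intro x y
    simp only [Matrix.mulVecLin_apply]
    rw [key, hMEM]
  · rintro v k hk ⟨x, hx⟩
    simp only [Matrix.mulVecLin_apply] at hx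
    have h2 : (Nmatᵀ * E8) *ᵥ v = 0 := by
      have : (Nmatᵀ * E8) *ᵥ (k • v) = 0 := by
        rw [← hx, Matrix.mulVec_mulVec, hNEM, Matrix.zero_mulVec]
      rw [Matrix.mulVec_smul] at this
      exact smul_eq_zero.mp this |>.resolve_left hk
    refine ⟨Lpmat *ᵥ v, ?_⟩
    have : (Mmat * Lpmat + Cpmat * (Nmatᵀ * E8)) *ᵥ v = v := by rw [hId2, Matrix.one_mulVec]
    simp only [Matrix.add_mulVec, ← Matrix.mulVec_mulVec, h2, Matrix.mulVec_zero, add_zero] at this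
    simpa [Matrix.mulVecLin_apply] using this
  · intro x y h
    have h1 : Lmat * Nmat = 1 := by decide
    simp only [Matrix.mulVecLin_apply] at h
    have := congrArg (fun v => Lmat *ᵥ v) h
    simpa [Matrix.mulVec_mulVec, h1] using this
  · intro x y
    simp only [Matrix.mulVecLin_apply]
    rw [key, hNEN]
  · intro v
    constructor
    · rintro ⟨c, rfl⟩ x
      simp only [Matrix.mulVecLin_apply]
      rw [key, hNEM, Matrix.zero_mulVec, dotProduct_zero]
    · intro hv
      have h2 : (Mmatᵀ * E8) *ᵥ v = 0 := by
        funext i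
        have := hv (Pi.single i 1)
        simp only [Matrix.mulVecLin_apply, Matrix.mulVec_mulVec, Matrix.dotProduct_mulVec,
          dotProduct_single, mul_one, ← Matrix.mulVec_transpose, Matrix.transpose_mul,
          show E8ᵀ = E8 by decide] at this
        simpa [← Matrix.mul_assoc] using this
      refine ⟨Lmat *ᵥ v, ?_⟩
      have : (Nmat * Lmat + Cmat * (Mmatᵀ * E8)) *ᵥ v = v := by rw [hId1, Matrix.one_mulVec]
      simp only [Matrix.add_mulVec, ← Matrix.mulVec_mulVec, h2, Matrix.mulVec_zero, add_zero] at this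
      simpa [Matrix.mulVecLin_apply] using this
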